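/- For fundamental weights of sp_{2n}: Σ_{k≥0} #S(ω_{i−2k}) = C(2n, i), where the sum is over all k with i − 2k ≥ 0 and S(ω_0) is the one-point set {0}. -/

import Mathlib

open scoped BigOperators TensorProduct

namespace SpPBW

/-- Coded positive roots of `C_n`: a pair `(i,c)` with `1 ≤ i ≤ c ≤ 2n - i`.
For `c ≤ n` this codes the root `α_{i,c} = α_i + ⋯ + α_c`; for `c > n` it codes the
root `α_{i, (2n-c)-bar} = α_i + ⋯ + α_n + α_{n-1} + ⋯ + α_{2n-c}`. -/
def ValidPair (n : ℕ) (a : ℕ × ℕ) : Prop :=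
  1 ≤ a.1 ∧ a.1 ≤ a.2 ∧ a.2 ≤ 2 * n - a.1

instance (n : ℕ) : DecidablePred (ValidPair n) := fun a =>
  decidable_of_iff (1 ≤ a.1 ∧ a.1 ≤ a.2 ∧ a.2 ≤ 2 * n - a.1) Iff.rfl

def validFinset (n : ℕ) : Finset (ℕ × ℕ) :=
  (Finset.Icc 1 n ×ˢ Finset.Icc 1 (2 * n)).filter fun a => ValidPair n a

/-- The order (2.8) on positive roots: `rootLt a b` means `f_a < f_b`,
i.e. `f_b` is larger (rows from top to bottom, within a row from left to right). -/
def rootLt (a b : ℕ × ℕ) : Prop := a.1 < b.1 ∨ (a.1 = b.1 ∧ a.2 < b.2)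

def DyckStep (a b : ℕ × ℕ) : Prop := b = (a.1, a.2 + 1) ∨ b = (a.1 + 1, a.2)

/-- A symplectic Dyck path (Definition 1.2). -/
def IsDyck (n : ℕ) (p : List (ℕ × ℕ)) : Prop :=
  p ≠ [] ∧ (∀ a ∈ p, ValidPair n a) ∧ (∃ i, p.head? = some (i, i)) ∧
  p.Chain' DyckStep ∧ (∃ j, p.getLast? = some (j, j) ∨ p.getLast? = some (j, 2 * n - j))

/-- The bound `m_i + ⋯ + m_j` (resp. `m_i + ⋯ + m_n`) for a Dyck path starting at `α_i`
and ending at `α_j` (resp. at `α_{j,j-bar}`). -/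
def pathBound (n : ℕ) (m : ℕ → ℕ) (p : List (ℕ × ℕ)) : ℕ :=
  match p.head?, p.getLast? with
  | some a, some b =>
      if b.1 = b.2 then ∑ l ∈ Finset.Icc a.1 b.2, m l else ∑ l ∈ Finset.Icc a.1 n, m l
  | _, _ => 0

/-- `InS n m s` says that the multi-exponent `s` is a lattice point of the
polytope `P(λ)` for `λ = Σ m_i ω_i`, i.e. `s ∈ S(λ)`. -/
def InS (n : ℕ) (m : ℕ → ℕ) (s : ℕ × ℕ → ℕ) : Prop :=
  (∀ a, ¬ ValidPair n a → s a = 0) ∧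
  ∀ p : List (ℕ × ℕ), IsDyck n p → (p.map s).sum ≤ pathBound n m p

/-- The coefficient vector of the fundamental weight `ω_i`. -/
def fundWt (i : ℕ) : ℕ → ℕ := fun l => if l = i then 1 else 0

/-- total degree of a multi-exponent -/
def deg (n : ℕ) (s : ℕ × ℕ → ℕ) : ℕ := ∑ a ∈ validFinset n, s a

/-- `s_{i,•}`, the sum of the exponents in the `i`-th row -/
def rowDeg (n : ℕ) (s : ℕ × ℕ → ℕ) (i : ℕ) : ℕ :=
  ∑ a ∈ (validFinset n).filter (fun a => a.1 = i), s a

/-- `d(s) < d(t)` lexicographically, reading rows from the bottom (`i = n`) up. -/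
def dLt (n : ℕ) (s t : ℕ × ℕ → ℕ) : Prop :=
  ∃ i, 1 ≤ i ∧ i ≤ n ∧ rowDeg n s i < rowDeg n t i ∧
    ∀ j, i < j → j ≤ n → rowDeg n s j = rowDeg n t j

def dEq (n : ℕ) (s t : ℕ × ℕ → ℕ) : Prop := ∀ i, rowDeg n s i = rowDeg n t i

/-- `f^s > f^t` in the lexicographic order induced by the variable order (2.8). -/
def lexGt (n : ℕ) (s t : ℕ × ℕ → ℕ) : Prop :=
  ∃ a, ValidPair n a ∧ t a < s a ∧ ∀ b, ValidPair n b → rootLt a b → s b = t b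

/-- `mOrd n s t` is the relation `f^s ◁ f^t` of Definition 2.7 (`f^s` "greater"). -/
def mOrd (n : ℕ) (s t : ℕ × ℕ → ℕ) : Prop :=
  deg n t < deg n s ∨ (deg n s = deg n t ∧ (dLt n s t ∨ (dEq n s t ∧ lexGt n s t)))

/-- multiplicity of the simple root `α_l` in the coded root `a` -/
def coeffRoot (n : ℕ) (a : ℕ × ℕ) (l : ℕ) : ℕ :=
  (if a.1 ≤ l ∧ l ≤ a.2 ∧ l ≤ n then 1 else 0) +
  (if n < a.2 ∧ 2 * n - a.2 ≤ l ∧ l ≤ n - 1 then 1 else 0)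

/-- the Cartan matrix of type `C_n` (indices `1,…,n`, `α_n` long):
`cartanC n i j = ⟨α_i, α_j^∨⟩` -/
def cartanC (n i j : ℕ) : ℤ :=
  if i = j then 2 else if i = n ∧ j + 1 = n then -2
  else if i + 1 = j ∨ j + 1 = i then -1 else 0

/-- `⟨α_a, α_i^∨⟩` for a coded positive root `a` -/
def rootPairing (n : ℕ) (a : ℕ × ℕ) (i : ℕ) : ℤ :=
  ∑ l ∈ Finset.Icc 1 n, (coeffRoot n a l : ℤ) * cartanC n l i

/-- `R_i^s`: coded roots `β` in the support of `s` with `(ω_i, β) ≠ 0`. -/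
def Ris (n i : ℕ) (s : ℕ × ℕ → ℕ) : Set (ℕ × ℕ) :=
  {a | ValidPair n a ∧ s a ≠ 0 ∧ a.1 ≤ i ∧ i ≤ a.2}

/-- the set of minimal elements of `R_i^s` with respect to the order (2.8) -/
def Mis (n i : ℕ) (s : ℕ × ℕ → ℕ) : Set (ℕ × ℕ) :=
  {a | a ∈ Ris n i s ∧ ∀ b ∈ Ris n i s, ¬ rootLt b a}

-- the indicator multi-exponent `m_i^s` of `M_i^s`
open Classical in
noncomputable def mInd (n i : ℕ) (s : ℕ × ℕ → ℕ) : ℕ × ℕ → ℕ :=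
  fun a => if a ∈ Mis n i s then 1 else 0

section Lie

variable {L V : Type*} [LieRing L] [LieAlgebra ℂ L]
variable [AddCommGroup V] [Module ℂ V] [LieRingModule L V] [LieModule ℂ L V]

/-- `applyList [x₁,…,x_l] w = x₁ ⋅ (x₂ ⋅ ( ⋯ (x_l ⋅ w)))` -/
def applyList (xs : List L) (w : V) : V := xs.foldr (fun x u => ⁅x, u⁆) w

/-- the Chevalley–Serre relations for the Cartan matrix of type `C_n`, for
generators `h i, e i, f i`, `1 ≤ i ≤ n` -/
def SerreRels (n : ℕ) (h e f : ℕ → L) : Prop :=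
  ∀ i ∈ Finset.Icc 1 n, ∀ j ∈ Finset.Icc 1 n,
    ⁅h i, h j⁆ = 0 ∧
    ⁅e i, f j⁆ = (if i = j then h i else 0) ∧
    ⁅h i, e j⁆ = (cartanC n j i : ℂ) • e j ∧
    ⁅h i, f j⁆ = (-(cartanC n j i) : ℂ) • f j ∧
    (i ≠ j → ((LieAlgebra.ad ℂ L (e i)) ^ (1 - cartanC n j i).toNat) (e j) = 0 ∧
      ((LieAlgebra.ad ℂ L (f i)) ^ (1 - cartanC n j i).toNat) (f j) = 0)

/-- `L` is generated as a Lie algebra by the Chevalley generators; together with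
`SerreRels` this pins `L` down as a quotient of `sp_{2n}`. -/
def Generates (n : ℕ) (h e f : ℕ → L) : Prop :=
  LieSubalgebra.lieSpan ℂ L {x | ∃ i, 1 ≤ i ∧ i ≤ n ∧ (x = h i ∨ x = e i ∨ x = f i)} = ⊤

/-- `F a` is a nonzero vector of `h`-weight `-α_a`, i.e. a root vector `f_{α_a} ∈ n⁻`. -/
def RootVectors (n : ℕ) (h : ℕ → L) (F : ℕ × ℕ → L) : Prop :=
  ∀ a, ValidPair n a → F a ≠ 0 ∧
    ∀ i ∈ Finset.Icc 1 n, ⁅h i, F a⁆ = (-(rootPairing n a i) : ℂ) • F a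

/-- `v` is a highest weight vector of weight `λ = Σ m_i ω_i`. -/
def IsHWVector (n : ℕ) (h e : ℕ → L) (m : ℕ → ℕ) (v : V) : Prop :=
  v ≠ 0 ∧ (∀ i ∈ Finset.Icc 1 n, ⁅e i, v⁆ = 0) ∧
    ∀ i ∈ Finset.Icc 1 n, ⁅h i, v⁆ = (m i : ℂ) • v

/-- the PBW filtration `V(λ)_d = U(n⁻)_d v_λ` (with `n⁻` spanned by the `F a`) -/
def filt (n : ℕ) (F : ℕ × ℕ → L) (v : V) (d : ℕ) : Submodule ℂ V :=
  Submodule.span ℂ {w | ∃ xs : List (ℕ × ℕ), xs.length ≤ d ∧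
    (∀ a ∈ xs, ValidPair n a) ∧ w = applyList (xs.map F) v}

/-- the step below degree `d` of the PBW filtration (so `⊥` for `d = 0`) -/
def lowFilt (n : ℕ) (F : ℕ × ℕ → L) (v : V) (d : ℕ) : Submodule ℂ V :=
  if d = 0 then ⊥ else filt n F v (d - 1)

/-- the PBW filtration `U(n⁻)_d v` for a subalgebra `n⁻` -/
def filtSub (nminus : LieSubalgebra ℂ L) (v : V) (d : ℕ) : Submodule ℂ V :=
  Submodule.span ℂ {w | ∃ xs : List L, xs.length ≤ d ∧ (∀ x ∈ xs, x ∈ nminus) ∧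
    w = applyList xs v}

/-- a fixed enumeration of the coded positive roots -/
def pairList (n : ℕ) : List (ℕ × ℕ) :=
  ((List.range (n + 1)).flatMap fun i => (List.range (2 * n + 1)).map fun c => (i, c)).filter
    fun a => decide (ValidPair n a)

/-- a canonical list realizing a multi-exponent `s` -/
def canonList (n : ℕ) (s : ℕ × ℕ → ℕ) : List (ℕ × ℕ) :=
  (pairList n).flatMap fun a => List.replicate (s a) a

/-- the vector `f^s v` (computed in some fixed order of the factors) -/
def actMon (n : ℕ) (F : ℕ × ℕ → L) (v : V) (s : ℕ × ℕ → ℕ) : V :=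
  applyList ((canonList n s).map F) v

/-- the index type of the variables of `S(n⁻) = ℂ[f_α : α > 0]` -/
abbrev RootIdx (n : ℕ) := {a : ℕ × ℕ // ValidPair n a}

/-- extend a multi-exponent on the valid pairs by zero -/
def extendExp (n : ℕ) (t : RootIdx n →₀ ℕ) : ℕ × ℕ → ℕ :=
  fun a => if h : ValidPair n a then t ⟨a, h⟩ else 0

/-- the action of a polynomial `p ∈ S(n⁻)` on `v` (monomial by monomial, each
monomial acting by the corresponding product of root vectors) -/
noncomputable def actPoly (n : ℕ) (F : ℕ × ℕ → L) (v : V) (p : MvPolynomial (RootIdx n) ℂ) : V :=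
  ∑ t ∈ p.support, MvPolynomial.coeff t p • actMon n F v (extendExp n t)

/-- `rootSub n a b = some c` when `α_a - α_b` is the positive root `α_c` -/
def rootSub (n : ℕ) (a b : ℕ × ℕ) : Option (ℕ × ℕ) :=
  (pairList n).find? fun c =>
    (List.range (n + 1)).all fun l => coeffRoot n c l + coeffRoot n b l == coeffRoot n a l

/-- the operator `∂_{α_b}` on `S(n⁻)`: the derivation with `∂_{α_b} f_{α_a} = f_{α_a - α_b}`
if `α_a - α_b` is a positive root and `0` otherwise -/
noncomputable def pd (n : ℕ) (b : ℕ × ℕ) :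
    Derivation ℂ (MvPolynomial (RootIdx n) ℂ) (MvPolynomial (RootIdx n) ℂ) :=
  MvPolynomial.mkDerivation ℂ fun a =>
    match rootSub n a.1 b with
    | some c => if h : ValidPair n c then MvPolynomial.X ⟨c, h⟩ else 0
    | none => 0

/-- the generators `f_{α_{i,j}}^{m_i+⋯+m_j+1}` (`1 ≤ i ≤ j ≤ n-1`) and
`f_{α_{i,ī}}^{m_i+⋯+m_n+1}` (`1 ≤ i ≤ n`) of the space `R` -/
def genSet (n : ℕ) (m : ℕ → ℕ) : Set (MvPolynomial (RootIdx n) ℂ) :=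
  {p | (∃ (a : RootIdx n) (i j : ℕ), 1 ≤ i ∧ i ≤ j ∧ j ≤ n - 1 ∧ a.val = (i, j) ∧
          p = MvPolynomial.X a ^ ((∑ l ∈ Finset.Icc i j, m l) + 1)) ∨
       (∃ (a : RootIdx n) (i : ℕ), 1 ≤ i ∧ i ≤ n ∧ a.val = (i, 2 * n - i) ∧
          p = MvPolynomial.X a ^ ((∑ l ∈ Finset.Icc i n, m l) + 1))}

/-- the set `U(n⁺) ∘ R`: all results of applying words in the operators `∂_α` to
elements of `R` -/
def opGenSet (n : ℕ) (m : ℕ → ℕ) : Set (MvPolynomial (RootIdx n) ℂ) :=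
  {p | ∃ (ds : List (ℕ × ℕ)) (r : MvPolynomial (RootIdx n) ℂ), r ∈ genSet n m ∧
    (∀ b ∈ ds, ValidPair n b) ∧ p = ds.foldr (fun b q => pd n b q) r}

/-- the ideal `I(λ) = S(n⁻)·(U(n⁺) ∘ R)` -/
noncomputable def idealI (n : ℕ) (m : ℕ → ℕ) : Ideal (MvPolynomial (RootIdx n) ℂ) :=
  Ideal.span (opGenSet n m)

end Lie

end SpPBW

/-!
For `t ≤ n`, the Dyck path inequalities for `ω_t` force `s` to be the indicator function of an
antichain (for the componentwise order) of roots whose support contains `α_t`: a Dyck path through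
two comparable roots `a ≤ b` can be chosen with bound `[a.1 ≤ t ≤ b.2]`, and conversely a Dyck
path is a chain, so it meets an antichain at most once. Recording rows and reflected columns
`2n + 1 - c`, such antichains correspond to pairs `R ⊆ [1, t]`, `C ⊆ [1, 2n + 1 - t]` of equal
size in which `R` dominates `C` as in the ballot problem; a Pascal-type recursion counts these by
the ballot number `C(2n + 1, t) - C(2n + 1, t - 1)`. As this equals `C(2n, t) - C(2n, t - 2)`, the
sum over `t = i, i - 2, …` telescopes to `C(2n, i)`.
-/

namespace SpPBW

open Finset

def chooseInt (N : ℕ) (k : ℤ) : ℕ := if k < 0 then 0 else N.choose k.toNat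

def ballot (N : ℕ) (k : ℤ) : ℤ := chooseInt N k - chooseInt N (k - 1)

section Ballot

variable {N : ℕ} {k : ℤ}

@[simp] lemma chooseInt_natCast (N k : ℕ) : chooseInt N k = N.choose k := by
  simp [chooseInt]

lemma chooseInt_of_neg (hk : k < 0) : chooseInt N k = 0 := if_pos hk

lemma chooseInt_succ_add_one (N : ℕ) (k : ℤ) :
    chooseInt (N + 1) (k + 1) = chooseInt N k + chooseInt N (k + 1) := by
  rcases lt_trichotomy k (-1) with hk | rfl | hk
  · rw [chooseInt_of_neg (by omega), chooseInt_of_neg (by omega), chooseInt_of_neg (by omega)]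
  · simp [chooseInt]
  · lift k to ℕ using (by omega)
    exact_mod_cast Nat.choose_succ_succ' N k

lemma ballot_succ (N : ℕ) (k : ℤ) : ballot (N + 1) k = chooseInt N k - chooseInt N (k - 2) := by
  have h₁ := chooseInt_succ_add_one N (k - 1)
  have h₂ := chooseInt_succ_add_one N (k - 2)
  simp only [sub_add_cancel, show k - 2 + 1 = k - 1 by ring] at h₁ h₂
  simp only [ballot, h₁, h₂]
  push_cast
  ring

lemma ballot_succ_eq_add (N : ℕ) (k : ℤ) :
    ballot (N + 1) k = ballot N k + ballot N (k - 1) := by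
  rw [ballot_succ, ballot, ballot, show k - 1 - 1 = k - 2 by ring]
  ring

lemma ballot_two_mul_add_one_self (m : ℕ) : ballot (2 * m + 1) ((m : ℤ) + 1) = 0 := by
  rw [ballot, add_sub_cancel_right, ← Nat.cast_succ, chooseInt_natCast, chooseInt_natCast,
    Nat.choose_symm_half, sub_self]

end Ballot

def rank (S : Finset ℕ) (x : ℕ) : ℕ := #(S.filter (· < x))

section Rank

variable {S T : Finset ℕ} {x y : ℕ}

lemma rank_mono (h : x ≤ y) : rank S x ≤ rank S y :=
  card_le_card fun z hz => by simp only [mem_filter] at hz ⊢; exact ⟨hz.1, by omega⟩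

lemma rank_mono_left (h : S ⊆ T) : rank S x ≤ rank T x :=
  card_le_card (filter_subset_filter _ h)

lemma rank_lt_rank (hx : x ∈ S) (hxy : x < y) : rank S x < rank S y :=
  card_lt_card ⟨fun z hz => by simp only [mem_filter] at hz ⊢; exact ⟨hz.1, by omega⟩,
    fun h => lt_irrefl x (mem_filter.1 (h (mem_filter.2 ⟨hx, hxy⟩))).2⟩

lemma rank_injOn (hx : x ∈ S) (hy : y ∈ S) (h : rank S x = rank S y) : x = y := by
  rcases lt_trichotomy x y with hxy | rfl | hxy
  · exact absurd h (rank_lt_rank hx hxy).ne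
  · rfl
  · exact absurd h (rank_lt_rank hy hxy).ne'

lemma rank_succ_of_mem (hx : x ∈ S) : rank S (x + 1) = rank S x + 1 := by
  have h : S.filter (· < x + 1) = insert x (S.filter (· < x)) := by
    ext z
    simp only [mem_filter, mem_insert]
    constructor
    · rintro ⟨hz, hzx⟩
      by_cases hzx' : z = x
      · exact Or.inl hzx'
      · exact Or.inr ⟨hz, by omega⟩
    · rintro (rfl | ⟨hz, hzx⟩)
      · exact ⟨hx, by omega⟩
      · exact ⟨hz, by omega⟩
  rw [rank, rank, h, card_insert_of_notMem (by simp)]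

lemma rank_eq_card (h : ∀ z ∈ S, z < x) : rank S x = #S := by
  rw [rank, filter_true_of_mem h]

lemma rank_lt_card (hx : x ∈ S) : rank S x < #S :=
  card_lt_card (filter_ssubset.2 ⟨x, hx, lt_irrefl x⟩)

lemma exists_rank_eq {k : ℕ} (hk : k < #S) : ∃ x ∈ S, rank S x = k := by
  have himage : S.image (rank S) = range #S :=
    eq_of_subset_of_card_le (fun j hj => by
        obtain ⟨x, hx, rfl⟩ := mem_image.1 hj
        exact mem_range.2 (rank_lt_card hx))
      (by rw [card_range, card_image_of_injOn fun x hx y hy => rank_injOn hx hy])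
  have hk' : k ∈ S.image (rank S) := himage ▸ mem_range.2 hk
  simpa using hk'

lemma rank_le_card : rank S x ≤ #S := card_filter_le _ _

lemma rank_insert_of_le (h : y ≤ x) : rank (insert x S) y = rank S y := by
  rw [rank, rank, filter_insert, if_neg (by omega)]

lemma rank_erase_of_le (h : y ≤ x) : rank (S.erase x) y = rank S y := by
  rw [rank, rank, filter_erase,
    erase_eq_of_notMem (by simp only [mem_filter, not_and, not_lt]; omega)]

lemma rank_eq_card_of_subset_Icc {m : ℕ} (hS : S ⊆ Icc 1 m) (hm : m < x) : rank S x = #S :=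
  rank_eq_card fun z hz => by have := mem_Icc.1 (hS hz); omega

end Rank

open Classical in
noncomputable def dominatingPairs (p q δ : ℕ) : Finset (Finset ℕ × Finset ℕ) :=
  ((Icc 1 p).powerset ×ˢ (Icc 1 q).powerset).filter fun RC =>
    #RC.1 = #RC.2 + δ ∧ ∀ v, rank RC.2 (v + 1) ≤ rank RC.1 v

section DominatingPairs

variable {p q δ : ℕ} {R C : Finset ℕ}

lemma mem_dominatingPairs :
    (R, C) ∈ dominatingPairs p q δ ↔ R ⊆ Icc 1 p ∧ C ⊆ Icc 1 q ∧ #R = #C + δ ∧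
      ∀ v, rank C (v + 1) ≤ rank R v := by
  simp only [dominatingPairs, mem_filter, mem_product, mem_powerset, and_assoc]

lemma subset_Icc_succ_iff {S : Finset ℕ} {m : ℕ} :
    S ⊆ Icc 1 (m + 1) ∧ m + 1 ∉ S ↔ S ⊆ Icc 1 m := by
  refine ⟨fun ⟨h, hm⟩ z hz => ?_,
    fun h => ⟨h.trans (Icc_subset_Icc_right m.le_succ), fun hm => ?_⟩⟩
  · have := mem_Icc.1 (h hz)
    have : z ≠ m + 1 := by rintro rfl; exact hm hz
    exact mem_Icc.2 (by omega)
  · have := mem_Icc.1 (h hm); omega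

lemma insert_subset_Icc_succ {S : Finset ℕ} {m : ℕ} (h : S ⊆ Icc 1 m) :
    insert (m + 1) S ⊆ Icc 1 (m + 1) :=
  insert_subset (by simp) (h.trans (Icc_subset_Icc_right m.le_succ))

lemma notMem_of_subset_Icc {S : Finset ℕ} {m : ℕ} (h : S ⊆ Icc 1 m) : m + 1 ∉ S :=
  (subset_Icc_succ_iff.2 h).2

lemma card_dominatingPairs_zero_left : #(dominatingPairs 0 q δ) = if δ = 0 then 1 else 0 := by
  have h : dominatingPairs 0 q δ = if δ = 0 then {(∅, ∅)} else ∅ := by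
    ext ⟨R, C⟩
    simp only [mem_dominatingPairs, Icc_eq_empty_of_lt zero_lt_one, subset_empty]
    split_ifs with hδ
    · subst hδ
      simp only [mem_singleton, Prod.mk.injEq]
      constructor
      · rintro ⟨rfl, -, hC, -⟩
        exact ⟨rfl, card_eq_zero.1 (by simpa using hC.symm)⟩
      · rintro ⟨rfl, rfl⟩
        simp [rank]
    · simp only [notMem_empty, iff_false]
      rintro ⟨rfl, -, hC, -⟩
      simp only [card_empty] at hC
      omega
  rw [h]
  split_ifs <;> rfl

lemma filter_notMem_right_dominatingPairs :
    (dominatingPairs p (q + 1) δ).filter (fun RC => q + 1 ∉ RC.2) = dominatingPairs p q δ := by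
  ext ⟨R, C⟩
  simp only [mem_filter, mem_dominatingPairs]
  rw [← subset_Icc_succ_iff (S := C) (m := q)]
  tauto

lemma filter_notMem_left_dominatingPairs :
    (dominatingPairs (p + 1) q δ).filter (fun RC => p + 1 ∉ RC.1) = dominatingPairs p q δ := by
  ext ⟨R, C⟩
  simp only [mem_filter, mem_dominatingPairs]
  rw [← subset_Icc_succ_iff (S := R) (m := p)]
  tauto

lemma card_filter_mem_right_dominatingPairs (hpq : p ≤ q) :
    #((dominatingPairs p (q + 1) δ).filter (fun RC => q + 1 ∈ RC.2)) =
      #(dominatingPairs p q (δ + 1)) := by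
  refine card_nbij' (fun RC => (RC.1, RC.2.erase (q + 1))) (fun RC => (RC.1, insert (q + 1) RC.2))
    ?_ ?_ ?_ ?_
  · rintro ⟨R, C⟩ h
    dsimp only
    simp only [coe_filter, Set.mem_ofPred_eq, mem_dominatingPairs] at h
    obtain ⟨⟨hR, hC, hcard, hdom⟩, hq⟩ := h
    have := card_erase_add_one hq
    refine mem_dominatingPairs.2 ⟨hR, subset_Icc_succ_iff.1 ⟨(erase_subset _ _).trans hC,
      notMem_erase _ _⟩, by omega, fun v => (rank_mono_left (erase_subset _ _)).trans (hdom v)⟩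
  · rintro ⟨R, C⟩ h
    dsimp only
    simp only [mem_coe, mem_dominatingPairs] at h
    obtain ⟨hR, hC, hcard, hdom⟩ := h
    have hq := notMem_of_subset_Icc hC
    simp only [coe_filter, Set.mem_ofPred_eq, mem_dominatingPairs, mem_insert_self, and_true]
    refine ⟨hR, insert_subset_Icc_succ hC, by rw [card_insert_of_notMem hq]; omega, fun v => ?_⟩
    rcases le_or_gt v q with hv | hv
    · rw [rank_insert_of_le (by omega)]
      exact hdom v
    · rw [rank_eq_card_of_subset_Icc hR (by omega)]
      have := (rank_le_card (S := insert (q + 1) C) (x := v + 1)).trans (card_insert_le _ _)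
      omega
  · rintro ⟨R, C⟩ h
    simp only [coe_filter, Set.mem_ofPred_eq] at h
    simp [insert_erase h.2]
  · rintro ⟨R, C⟩ h
    simp only [mem_coe, mem_dominatingPairs] at h
    simp [erase_insert (notMem_of_subset_Icc h.2.1)]

lemma card_filter_mem_left_dominatingPairs :
    #((dominatingPairs (p + 1) q (δ + 1)).filter (fun RC => p + 1 ∈ RC.1)) =
      #(dominatingPairs p q δ) := by
  refine card_nbij' (fun RC => (RC.1.erase (p + 1), RC.2)) (fun RC => (insert (p + 1) RC.1, RC.2))
    ?_ ?_ ?_ ?_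
  · rintro ⟨R, C⟩ h
    dsimp only
    simp only [coe_filter, Set.mem_ofPred_eq, mem_dominatingPairs] at h
    obtain ⟨⟨hR, hC, hcard, hdom⟩, hp⟩ := h
    have := card_erase_add_one hp
    have hR' := subset_Icc_succ_iff.1 ⟨(erase_subset _ _).trans hR, notMem_erase _ _⟩
    refine mem_dominatingPairs.2 ⟨hR', hC, by omega, fun v => ?_⟩
    rcases le_or_gt v (p + 1) with hv | hv
    · rw [rank_erase_of_le hv]
      exact hdom v
    · rw [rank_eq_card_of_subset_Icc hR' (by omega)]
      have := rank_le_card (S := C) (x := v + 1)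
      omega
  · rintro ⟨R, C⟩ h
    dsimp only
    simp only [mem_coe, mem_dominatingPairs] at h
    obtain ⟨hR, hC, hcard, hdom⟩ := h
    have hp := notMem_of_subset_Icc hR
    simp only [coe_filter, Set.mem_ofPred_eq, mem_dominatingPairs, mem_insert_self, and_true]
    exact ⟨insert_subset_Icc_succ hR, hC, by rw [card_insert_of_notMem hp]; omega,
      fun v => (hdom v).trans (rank_mono_left (subset_insert _ _))⟩
  · rintro ⟨R, C⟩ h
    simp only [coe_filter, Set.mem_ofPred_eq] at h
    simp [insert_erase h.2]
  · rintro ⟨R, C⟩ h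
    simp only [mem_coe, mem_dominatingPairs] at h
    simp [erase_insert (notMem_of_subset_Icc h.1)]

lemma filter_mem_left_dominatingPairs_self :
    (dominatingPairs (p + 1) (p + 1) 0).filter (fun RC => p + 1 ∈ RC.1) = ∅ := by
  refine filter_eq_empty_iff.2 ?_
  rintro ⟨R, C⟩ h (hp : p + 1 ∈ R)
  obtain ⟨hR, hC, hcard, hdom⟩ := mem_dominatingPairs.1 h
  have h₁ := hdom (p + 1)
  rw [rank_eq_card_of_subset_Icc hC (by omega)] at h₁
  have h₂ := rank_lt_rank hp (Nat.lt_succ_self (p + 1))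
  rw [rank_eq_card_of_subset_Icc hR (Nat.lt_succ_self (p + 1))] at h₂
  omega

lemma card_dominatingPairs_succ_right (hpq : p ≤ q) :
    #(dominatingPairs p (q + 1) δ) =
      #(dominatingPairs p q δ) + #(dominatingPairs p q (δ + 1)) := by
  rw [← card_filter_add_card_filter_not (fun RC => q + 1 ∈ RC.2),
    card_filter_mem_right_dominatingPairs hpq, filter_notMem_right_dominatingPairs, add_comm]

lemma card_dominatingPairs_succ_left :
    #(dominatingPairs (p + 1) q (δ + 1)) =
      #(dominatingPairs p q (δ + 1)) + #(dominatingPairs p q δ) := by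
  rw [← card_filter_add_card_filter_not (fun RC => p + 1 ∈ RC.1),
    card_filter_mem_left_dominatingPairs, filter_notMem_left_dominatingPairs, add_comm]

lemma card_dominatingPairs_succ_self :
    #(dominatingPairs (p + 1) (p + 1) 0) = #(dominatingPairs p (p + 1) 0) := by
  rw [← card_filter_add_card_filter_not (fun RC => p + 1 ∈ RC.1),
    filter_mem_left_dominatingPairs_self, filter_notMem_left_dominatingPairs, card_empty, zero_add]

theorem card_dominatingPairs (hpq : p ≤ q) :
    (#(dominatingPairs p q δ) : ℤ) = ballot (p + q) (p - δ) := by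
  induction q generalizing p δ with
  | zero =>
    obtain rfl : p = 0 := by omega
    rw [card_dominatingPairs_zero_left]
    rcases δ with _ | δ <;> simp [ballot, chooseInt]
  | succ q ih =>
    have hright : ∀ {p δ : ℕ}, p ≤ q →
        (#(dominatingPairs p (q + 1) δ) : ℤ) = ballot (p + (q + 1)) (p - δ) := by
      intro p δ hpq
      rw [card_dominatingPairs_succ_right hpq, Nat.cast_add, ih hpq, ih hpq, ← add_assoc,
        ballot_succ_eq_add]
      push_cast
      ring_nf
    rcases hpq.lt_or_eq with hpq | rfl
    · exact hright (by omega)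
    · cases δ with
      | zero =>
        rw [card_dominatingPairs_succ_self, hright le_rfl, show q + (q + 1) = 2 * q + 1 by ring,
          show q + 1 + (q + 1) = 2 * q + 1 + 1 by ring, ballot_succ_eq_add (2 * q + 1)]
        push_cast
        simp only [sub_zero, add_sub_cancel_right, ballot_two_mul_add_one_self, zero_add]
      | succ δ =>
        rw [card_dominatingPairs_succ_left, Nat.cast_add, hright le_rfl, hright le_rfl,
          show q + 1 + (q + 1) = q + (q + 1) + 1 by ring, ballot_succ_eq_add]
        push_cast
        ring_nf

end DominatingPairs

section AntichainProd

variable {α β : Type*} [LinearOrder α] [LinearOrder β] {A : Set (α × β)} {a b : α × β}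

lemma fst_lt_iff_of_isAntichain (hA : IsAntichain (· ≤ ·) A) (ha : a ∈ A) (hb : b ∈ A) :
    a.1 < b.1 ↔ b.2 < a.2 := by
  constructor
  · intro h
    by_contra h'
    exact hA ha hb (by rintro rfl; exact lt_irrefl _ h) ⟨h.le, not_lt.1 h'⟩
  · intro h
    by_contra h'
    exact hA hb ha (by rintro rfl; exact lt_irrefl _ h) ⟨not_lt.1 h', h.le⟩

lemma injOn_fst_of_isAntichain (hA : IsAntichain (· ≤ ·) A) : Set.InjOn Prod.fst A :=
  fun a ha b hb h => by
    by_contra hab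
    rcases le_total a.2 b.2 with h' | h'
    · exact hA ha hb hab ⟨h.le, h'⟩
    · exact hA hb ha (Ne.symm hab) ⟨h.ge, h'⟩

lemma injOn_snd_of_isAntichain (hA : IsAntichain (· ≤ ·) A) : Set.InjOn Prod.snd A :=
  fun a ha b hb h => by
    by_contra hab
    rcases le_total a.1 b.1 with h' | h'
    · exact hA ha hb hab ⟨h', h.le⟩
    · exact hA hb ha (Ne.symm hab) ⟨h', h.ge⟩

end AntichainProd

lemma mem_validFinset {n : ℕ} {a : ℕ × ℕ} : a ∈ validFinset n ↔ ValidPair n a := by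
  rw [validFinset, mem_filter, mem_product, mem_Icc, mem_Icc]
  unfold ValidPair
  omega

/-- The positive roots whose support contains `α_t`. -/
def window (n t : ℕ) : Finset (ℕ × ℕ) :=
  (validFinset n).filter fun a => a.1 ≤ t ∧ t ≤ a.2

open Classical in
noncomputable def windowAntichains (n t : ℕ) : Finset (Finset (ℕ × ℕ)) :=
  (window n t).powerset.filter fun A => IsAntichain (· ≤ ·) (A : Set (ℕ × ℕ))

def colRefl (n : ℕ) (a : ℕ × ℕ) : ℕ := 2 * n + 1 - a.2

/-- Inverse of `A ↦ (A.image Prod.fst, A.image (colRefl n))`: the `k`-th smallest element of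
`R` is paired with the `k`-th smallest element of `C`. -/
def matchByRank (n t : ℕ) (R C : Finset ℕ) : Finset (ℕ × ℕ) :=
  (window n t).filter fun a => a.1 ∈ R ∧ colRefl n a ∈ C ∧ rank R a.1 = rank C (colRefl n a)

section Antichains

variable {n t : ℕ} {a : ℕ × ℕ} {A : Finset (ℕ × ℕ)} {R C : Finset ℕ}

lemma mem_window :
    a ∈ window n t ↔ 1 ≤ a.1 ∧ a.1 ≤ t ∧ t ≤ a.2 ∧ a.1 + a.2 ≤ 2 * n := by
  simp only [window, mem_filter, mem_validFinset, ValidPair]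
  omega

lemma mem_windowAntichains :
    A ∈ windowAntichains n t ↔
      A ⊆ window n t ∧ IsAntichain (· ≤ ·) (A : Set (ℕ × ℕ)) := by
  simp [windowAntichains]

lemma rank_image_of_injOn {f : ℕ × ℕ → ℕ} (hf : Set.InjOn f A) (x : ℕ) :
    rank (A.image f) x = #(A.filter (f · < x)) := by
  rw [rank, filter_image, card_image_of_injOn (hf.mono (coe_subset.2 (filter_subset _ _)))]

lemma injOn_colRefl (hA : A ∈ windowAntichains n t) :
    Set.InjOn (colRefl n) (A : Set (ℕ × ℕ)) :=
  fun a ha b hb h => by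
    obtain ⟨hAw, hA⟩ := mem_windowAntichains.1 hA
    have := mem_window.1 (hAw ha)
    have := mem_window.1 (hAw hb)
    exact injOn_snd_of_isAntichain hA ha hb (by unfold colRefl at h; omega)

lemma rank_fst_eq_rank_colRefl (hA : A ∈ windowAntichains n t) (ha : a ∈ A) :
    rank (A.image Prod.fst) a.1 = rank (A.image (colRefl n)) (colRefl n a) := by
  obtain ⟨hAw, hA'⟩ := mem_windowAntichains.1 hA
  rw [rank_image_of_injOn (injOn_fst_of_isAntichain hA'), rank_image_of_injOn (injOn_colRefl hA)]
  refine congrArg card (filter_congr fun b hb => ?_)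
  have := mem_window.1 (hAw ha)
  have := mem_window.1 (hAw hb)
  rw [fst_lt_iff_of_isAntichain hA' hb ha]
  unfold colRefl
  omega

lemma mem_dominatingPairs_of_mem_windowAntichains (hA : A ∈ windowAntichains n t) :
    (A.image Prod.fst, A.image (colRefl n)) ∈ dominatingPairs t (2 * n + 1 - t) 0 := by
  obtain ⟨hAw, hA'⟩ := mem_windowAntichains.1 hA
  refine mem_dominatingPairs.2 ⟨fun r hr => ?_, fun c hc => ?_, ?_, fun v => ?_⟩
  · obtain ⟨a, ha, rfl⟩ := mem_image.1 hr
    have := mem_window.1 (hAw ha)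
    exact mem_Icc.2 (by omega)
  · obtain ⟨a, ha, rfl⟩ := mem_image.1 hc
    have := mem_window.1 (hAw ha)
    exact mem_Icc.2 (by unfold colRefl; omega)
  · rw [card_image_of_injOn (injOn_fst_of_isAntichain hA'), card_image_of_injOn (injOn_colRefl hA),
      add_zero]
  · rw [rank_image_of_injOn (injOn_fst_of_isAntichain hA'), rank_image_of_injOn (injOn_colRefl hA)]
    refine card_le_card fun a ha => ?_
    obtain ⟨ha, hv⟩ := mem_filter.1 ha
    have := mem_window.1 (hAw ha)
    exact mem_filter.2 ⟨ha, by unfold colRefl at hv; omega⟩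

lemma matchByRank_image (hA : A ∈ windowAntichains n t) :
    matchByRank n t (A.image Prod.fst) (A.image (colRefl n)) = A := by
  obtain ⟨hAw, -⟩ := mem_windowAntichains.1 hA
  ext x
  simp only [matchByRank, mem_filter, mem_image]
  constructor
  · rintro ⟨hx, ⟨a, ha, hxa⟩, ⟨b, hb, hxb⟩, hrank⟩
    obtain rfl : a = b := injOn_colRefl hA ha hb <|
      rank_injOn (mem_image_of_mem _ ha) (mem_image_of_mem _ hb) <| by
        rw [← rank_fst_eq_rank_colRefl hA ha, hxa, hrank, ← hxb]
    have := mem_window.1 hx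
    have := mem_window.1 (hAw ha)
    obtain rfl : x = a := Prod.ext hxa.symm (by unfold colRefl at hxb; omega)
    exact ha
  · intro hx
    exact ⟨hAw hx, ⟨x, hx, rfl⟩, ⟨x, hx, rfl⟩, rank_fst_eq_rank_colRefl hA hx⟩

lemma lt_of_rank_eq_rank (hdom : ∀ v, rank C (v + 1) ≤ rank R v) {r c : ℕ} (hc : c ∈ C)
    (h : rank R r = rank C c) : r < c := by
  by_contra hcr
  have := hdom c
  have := rank_mono (S := R) (not_lt.1 hcr)
  rw [rank_succ_of_mem hc] at *
  omega

lemma matchByRank_mem_windowAntichains : matchByRank n t R C ∈ windowAntichains n t := by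
  refine mem_windowAntichains.2 ⟨filter_subset _ _, fun a ha b hb hab hle => hab ?_⟩
  obtain ⟨haw, har, hac, harank⟩ := mem_filter.1 (mem_coe.1 ha)
  obtain ⟨hbw, hbr, hbc, hbrank⟩ := mem_filter.1 (mem_coe.1 hb)
  have hcol : colRefl n b ≤ colRefl n a := by unfold colRefl; have := hle.2; omega
  obtain h₁ | h₁ := hle.1.lt_or_eq
  · have := rank_lt_rank har h₁
    have := rank_mono (S := C) hcol
    omega
  · have hcol' := rank_injOn hac hbc (by rw [← harank, ← hbrank, h₁])
    have := mem_window.1 haw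
    have := mem_window.1 hbw
    exact Prod.ext h₁ (by unfold colRefl at hcol'; omega)

section MatchByRank

variable (hRC : (R, C) ∈ dominatingPairs t (2 * n + 1 - t) 0)
include hRC

lemma mem_matchByRank {r c : ℕ} (hr : r ∈ R) (hc : c ∈ C) (h : rank R r = rank C c) :
    (r, 2 * n + 1 - c) ∈ matchByRank n t R C := by
  obtain ⟨hR, hC, -, hdom⟩ := mem_dominatingPairs.1 hRC
  have := mem_Icc.1 (hR hr)
  have := mem_Icc.1 (hC hc)
  have := lt_of_rank_eq_rank hdom hc h
  have hcc : colRefl n (r, 2 * n + 1 - c) = c := by unfold colRefl; omega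
  simp only [matchByRank, mem_filter, mem_window, hcc]
  exact ⟨by omega, hr, hc, h⟩

lemma image_fst_matchByRank : (matchByRank n t R C).image Prod.fst = R := by
  refine Subset.antisymm (fun r hr => ?_) (fun r hr => ?_)
  · obtain ⟨a, ha, rfl⟩ := mem_image.1 hr
    exact (mem_filter.1 ha).2.1
  · obtain ⟨-, -, hcard, -⟩ := mem_dominatingPairs.1 hRC
    obtain ⟨c, hc, hrank⟩ := exists_rank_eq (hcard ▸ rank_lt_card hr)
    exact mem_image.2 ⟨_, mem_matchByRank hRC hr hc hrank.symm, rfl⟩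

lemma image_colRefl_matchByRank : (matchByRank n t R C).image (colRefl n) = C := by
  refine Subset.antisymm (fun c hc => ?_) (fun c hc => ?_)
  · obtain ⟨a, ha, rfl⟩ := mem_image.1 hc
    exact (mem_filter.1 ha).2.2.1
  · obtain ⟨-, hC, hcard, -⟩ := mem_dominatingPairs.1 hRC
    obtain ⟨r, hr, hrank⟩ := exists_rank_eq ((add_zero #C ▸ hcard) ▸ rank_lt_card hc)
    have := mem_Icc.1 (hC hc)
    exact mem_image.2 ⟨_, mem_matchByRank hRC hr hc hrank, by unfold colRefl; omega⟩

end MatchByRank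

theorem card_windowAntichains : #(windowAntichains n t) = #(dominatingPairs t (2 * n + 1 - t) 0) :=
  card_nbij' (fun A => (A.image Prod.fst, A.image (colRefl n)))
    (fun RC => matchByRank n t RC.1 RC.2)
    (fun _ hA => mem_dominatingPairs_of_mem_windowAntichains hA)
    (fun _ _ => matchByRank_mem_windowAntichains)
    (fun _ hA => matchByRank_image hA)
    (fun _ hRC => Prod.ext (image_fst_matchByRank hRC) (image_colRefl_matchByRank hRC))

end Antichains

lemma DyckStep.lt {a b : ℕ × ℕ} (h : DyckStep a b) : a < b := by
  rcases h with rfl | rfl <;> simp [Prod.lt_iff]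

lemma pairwise_lt_of_isChain {p : List (ℕ × ℕ)} (hp : p.IsChain DyckStep) :
    p.Pairwise (· < ·) :=
  (hp.imp fun _ _ => DyckStep.lt).pairwise

lemma le_and_le_of_isChain {p : List (ℕ × ℕ)} (hp : p.IsChain DyckStep) {x e z : ℕ × ℕ}
    (hx : p.head? = some x) (he : p.getLast? = some e) (hz : z ∈ p) : x ≤ z ∧ z ≤ e := by
  have hle : p.Pairwise (· ≤ ·) := (pairwise_lt_of_isChain hp).imp le_of_lt
  constructor
  · obtain ⟨l, rfl⟩ := List.head?_eq_some_iff.1 hx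
    rcases List.mem_cons.1 hz with rfl | hz
    · exact le_rfl
    · exact List.rel_of_pairwise_cons hle hz
  · obtain ⟨l, rfl⟩ := List.getLast?_eq_some_iff.1 he
    rcases List.mem_append.1 hz with hz | hz
    · exact List.pairwise_append.1 hle |>.2.2 z hz e (List.mem_singleton_self e)
    · exact (List.mem_singleton.1 hz).le

lemma sum_Icc_fundWt (t u v : ℕ) :
    ∑ l ∈ Icc u v, fundWt t l = if u ≤ t ∧ t ≤ v then 1 else 0 := by
  simp [fundWt, sum_ite_eq', mem_Icc]

lemma pathBound_fundWt {n t : ℕ} (ht : t ≤ n) {p : List (ℕ × ℕ)} (hp : IsDyck n p)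
    {x e : ℕ × ℕ} (hx : p.head? = some x) (he : p.getLast? = some e) :
    pathBound n (fundWt t) p = if x.1 ≤ t ∧ t ≤ e.2 then 1 else 0 := by
  obtain ⟨-, hvalid, -, -, j, hj⟩ := hp
  simp only [pathBound, hx, he, sum_Icc_fundWt]
  by_cases hdiag : e.1 = e.2
  · rw [if_pos hdiag]
  · rw [if_neg hdiag]
    have hvalid := hvalid e (List.mem_of_getLast? he)
    obtain rfl : e = (j, 2 * n - j) := by
      rcases hj with h | h <;> rw [he, Option.some.injEq] at h <;> subst h
      · exact (hdiag rfl).elim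
      · rfl
    unfold ValidPair at hvalid
    simp only at hvalid ⊢
    congr 2
    exact propext ⟨fun _ => by omega, fun _ => ht⟩

lemma exists_isChain_rightDown {x y : ℕ × ℕ} (hxy : x ≤ y) :
    ∃ l, (x :: l).IsChain DyckStep ∧ (x :: l).getLast? = some y ∧
      ∀ z ∈ x :: l, x ≤ z ∧ z ≤ y ∧ (z.1 = x.1 ∨ z.2 = y.2) := by
  obtain ⟨d, hd⟩ : ∃ d, (y.1 - x.1) + (y.2 - x.2) = d := ⟨_, rfl⟩
  induction d generalizing x with
  | zero =>
    obtain rfl : x = y := Prod.ext (by have := hxy.1; omega) (by have := hxy.2; omega)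
    exact ⟨[], by simp, rfl, by simp⟩
  | succ d ih =>
    obtain ⟨hxy₁, hxy₂⟩ := hxy
    by_cases hright : x.2 < y.2
    · obtain ⟨l, hchain, hlast, hbox⟩ :=
        ih (x := (x.1, x.2 + 1)) ⟨hxy₁, by simpa using hright⟩ (by simp only; omega)
      refine ⟨(x.1, x.2 + 1) :: l, List.isChain_cons_cons.2 ⟨Or.inl rfl, hchain⟩,
        by rwa [List.getLast?_cons_cons], ?_⟩
      rintro z (_ | ⟨_, hz⟩)
      · exact ⟨le_rfl, ⟨hxy₁, hxy₂⟩, Or.inl rfl⟩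
      · obtain ⟨⟨h₁, h₂⟩, hzy, hz'⟩ := hbox z hz
        exact ⟨⟨h₁, by simp only at h₂; omega⟩, hzy, hz'⟩
    · obtain ⟨l, hchain, hlast, hbox⟩ :=
        ih (x := (x.1 + 1, x.2)) ⟨by simp only; omega, hxy₂⟩ (by simp only; omega)
      refine ⟨(x.1 + 1, x.2) :: l, List.isChain_cons_cons.2 ⟨Or.inr rfl, hchain⟩,
        by rwa [List.getLast?_cons_cons], ?_⟩
      rintro z (_ | ⟨_, hz⟩)
      · exact ⟨le_rfl, ⟨hxy₁, hxy₂⟩, Or.inl rfl⟩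
      · obtain ⟨⟨h₁, h₂⟩, ⟨h₃, h₄⟩, -⟩ := hbox z hz
        exact ⟨⟨by simp only at h₁; omega, h₂⟩, ⟨h₃, h₄⟩,
          Or.inr (by simp only at h₂; omega)⟩

lemma validPair_of_le_of_le {n : ℕ} {x y z : ℕ × ℕ} (hx : ValidPair n x) (hy : ValidPair n y)
    (hxz : x ≤ z) (hzy : z ≤ y) (hz : z.1 = x.1 ∨ z.2 = y.2) : ValidPair n z := by
  obtain ⟨h₁, h₂⟩ := hxz
  obtain ⟨h₃, h₄⟩ := hzy
  unfold ValidPair at *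
  omega

lemma exists_isChain_valid {n : ℕ} {x y : ℕ × ℕ} (hx : ValidPair n x) (hy : ValidPair n y)
    (hxy : x ≤ y) :
    ∃ l, (x :: l).IsChain DyckStep ∧ (x :: l).getLast? = some y ∧
      ∀ z ∈ x :: l, ValidPair n z :=
  have ⟨l, hchain, hlast, hbox⟩ := exists_isChain_rightDown hxy
  ⟨l, hchain, hlast, fun z hz =>
    have ⟨hxz, hzy, hz⟩ := hbox z hz
    validPair_of_le_of_le hx hy hxz hzy hz⟩

lemma isChain_cons_append {α : Type*} {R : α → α → Prop} {x y : α} {l₁ l₂ : List α}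
    (h₁ : (x :: l₁).IsChain R) (hy : (x :: l₁).getLast? = some y)
    (h₂ : (y :: l₂).IsChain R) :
    (x :: (l₁ ++ l₂)).IsChain R ∧ (x :: (l₁ ++ l₂)).getLast? = (y :: l₂).getLast? := by
  rw [← List.cons_append]
  refine ⟨h₁.append h₂.tail fun a ha b hb => ?_, ?_⟩
  · rw [hy, Option.mem_some_iff] at ha
    exact ha ▸ h₂.rel_head? hb
  · rw [List.getLast?_append, hy, List.getLast?_cons]
    cases l₂.getLast? <;> rfl

lemma exists_isDyck_mem_mem {n : ℕ} {a b : ℕ × ℕ} (ha : ValidPair n a) (hb : ValidPair n b)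
    (hab : a ≤ b) :
    ∃ p e, IsDyck n p ∧ a ∈ p ∧ b ∈ p ∧ p.head? = some (a.1, a.1) ∧
      p.getLast? = some e ∧ e.2 = b.2 := by
  -- Right to `a`, on to `b`, then down column `b.2` until the diagonal or the antidiagonal.
  set e : ℕ × ℕ := (min b.2 (2 * n - b.2), b.2) with he
  have hstart : ValidPair n (a.1, a.1) := by unfold ValidPair at *; simp only; omega
  have he_valid : ValidPair n e := by unfold ValidPair at *; simp only [he]; omega
  obtain ⟨l₁, hc₁, hl₁, hv₁⟩ := exists_isChain_valid hstart ha ⟨le_rfl, ha.2.1⟩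
  obtain ⟨l₂, hc₂, hl₂, hv₂⟩ := exists_isChain_valid ha hb hab
  obtain ⟨l₃, hc₃, hl₃, hv₃⟩ := exists_isChain_valid hb he_valid
    ⟨by unfold ValidPair at hb; simp only [he]; omega, le_rfl⟩
  obtain ⟨hc₂₃, hl₂₃⟩ := isChain_cons_append hc₂ hl₂ hc₃
  obtain ⟨hc, hl⟩ := isChain_cons_append hc₁ hl₁ hc₂₃
  have hsub₁ : (a.1, a.1) :: l₁ ⊆ (a.1, a.1) :: (l₁ ++ (l₂ ++ l₃)) :=
    List.cons_subset_cons _ (List.subset_append_left _ _)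
  have hsub₂ : a :: l₂ ⊆ (a.1, a.1) :: (l₁ ++ (l₂ ++ l₃)) :=
    List.cons_subset.2 ⟨hsub₁ (List.mem_of_getLast? hl₁), fun z hz => by simp [hz]⟩
  refine ⟨(a.1, a.1) :: (l₁ ++ (l₂ ++ l₃)), e,
    ⟨List.cons_ne_nil _ _, fun z hz => ?_, ⟨a.1, rfl⟩, hc, ?_⟩,
    hsub₁ (List.mem_of_getLast? hl₁), hsub₂ (List.mem_of_getLast? hl₂), rfl,
    hl.trans (hl₂₃.trans hl₃), rfl⟩
  · simp only [List.mem_cons, List.mem_append] at hz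
    rcases hz with rfl | hz | hz | hz
    · exact hstart
    · exact hv₁ z (List.mem_cons_of_mem _ hz)
    · exact hv₂ z (List.mem_cons_of_mem _ hz)
    · exact hv₃ z (List.mem_cons_of_mem _ hz)
  · rw [hl, hl₂₃, hl₃]
    rcases le_total b.2 n with h | h
    · exact ⟨b.2, Or.inl (by rw [he, min_eq_left (by omega)])⟩
    · unfold ValidPair at hb
      exact ⟨2 * n - b.2, Or.inr (by rw [he, min_eq_right (by omega)]; congr 2; omega)⟩

lemma le_total_of_isChain {p : List (ℕ × ℕ)} (hp : p.IsChain DyckStep) {x y : ℕ × ℕ}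
    (hx : x ∈ p) (hy : y ∈ p) : x ≤ y ∨ y ≤ x := by
  by_cases hxy : x = y
  · exact Or.inl hxy.le
  · have : Std.Symm fun u v : ℕ × ℕ => u ≤ v ∨ v ≤ u := ⟨fun _ _ h => h.symm⟩
    have hp' : p.Pairwise fun u v => u ≤ v ∨ v ≤ u :=
      (pairwise_lt_of_isChain hp).imp fun h => Or.inl h.le
    exact hp'.forall hx hy hxy

section Characterization

variable {n t : ℕ} {s : ℕ × ℕ → ℕ} {A : Finset (ℕ × ℕ)}

lemma sum_pair_le_of_inS (ht : t ≤ n) (hs : InS n (fundWt t) s) {a b : ℕ × ℕ}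
    (ha : ValidPair n a) (hb : ValidPair n b) (hab : a ≤ b) :
    ∑ z ∈ {a, b}, s z ≤ if a.1 ≤ t ∧ t ≤ b.2 then 1 else 0 := by
  obtain ⟨p, e, hp, hap, hbp, hhead, hlast, he⟩ := exists_isDyck_mem_mem ha hb hab
  have hnodup : p.Nodup := (pairwise_lt_of_isChain hp.2.2.2.1).imp ne_of_lt
  calc ∑ z ∈ {a, b}, s z ≤ ∑ z ∈ p.toFinset, s z :=
        sum_le_sum_of_subset (insert_subset (List.mem_toFinset.2 hap)
          (singleton_subset_iff.2 (List.mem_toFinset.2 hbp)))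
    _ = (p.map s).sum := List.sum_toFinset s hnodup
    _ ≤ pathBound n (fundWt t) p := hs.2 p hp
    _ = _ := by rw [pathBound_fundWt ht hp hhead hlast, he]

lemma exists_mem_windowAntichains_of_inS (ht : t ≤ n) (hs : InS n (fundWt t) s) :
    ∃ A ∈ windowAntichains n t, s = (A : Set (ℕ × ℕ)).indicator 1 := by
  have hvalid : ∀ a, s a ≠ 0 → ValidPair n a := fun a h => by_contra fun hv => h (hs.1 a hv)
  have hle : ∀ a, s a ≠ 0 → s a ≤ if a.1 ≤ t ∧ t ≤ a.2 then 1 else 0 := fun a h => by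
    simpa using sum_pair_le_of_inS ht hs (hvalid a h) (hvalid a h) le_rfl
  refine ⟨(validFinset n).filter (s · ≠ 0), mem_windowAntichains.2 ⟨fun a ha => ?_, ?_⟩,
    funext fun a => ?_⟩
  · obtain ⟨hva, hsa⟩ := mem_filter.1 ha
    have := hle a hsa
    split_ifs at this with hwin
    · exact mem_filter.2 ⟨hva, hwin⟩
    · omega
  · intro a ha b hb hne hab
    obtain ⟨hva, hsa⟩ := mem_filter.1 (mem_coe.1 ha)
    obtain ⟨hvb, hsb⟩ := mem_filter.1 (mem_coe.1 hb)
    have := sum_pair_le_of_inS ht hs (mem_validFinset.1 hva) (mem_validFinset.1 hvb) hab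
    rw [sum_pair hne] at this
    split_ifs at this <;> omega
  · by_cases h : s a = 0
    · simp [h]
    · have := hle a h
      rw [Set.indicator_of_mem (mem_filter.2 ⟨mem_validFinset.2 (hvalid a h), h⟩),
        Pi.one_apply]
      split_ifs at this <;> omega

lemma inS_indicator_of_mem_windowAntichains (ht : t ≤ n) (hA : A ∈ windowAntichains n t) :
    InS n (fundWt t) ((A : Set (ℕ × ℕ)).indicator 1) := by
  obtain ⟨hAw, hA'⟩ := mem_windowAntichains.1 hA
  refine ⟨fun a ha => Set.indicator_of_notMem (fun h => ha ?_) _, fun p hp => ?_⟩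
  · exact mem_validFinset.1 (mem_filter.1 (hAw h)).1
  obtain ⟨i, hhead⟩ := hp.2.2.1
  have hchain := hp.2.2.2.1
  obtain ⟨e, he⟩ : ∃ e, p.getLast? = some e :=
    Option.isSome_iff_exists.1 (by simpa using hp.1)
  have hnodup : p.Nodup := (pairwise_lt_of_isChain hchain).imp ne_of_lt
  have hsum : ∑ z ∈ p.toFinset, (A : Set (ℕ × ℕ)).indicator 1 z =
      #(p.toFinset.filter (· ∈ A)) := by
    rw [card_filter]
    exact sum_congr rfl fun z _ => by simp [Set.indicator_apply]
  rw [← List.sum_toFinset _ hnodup, pathBound_fundWt ht hp hhead he, hsum]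
  split_ifs with hwin
  · refine card_le_one.2 fun x hx y hy => ?_
    obtain ⟨hxp, hxA⟩ := mem_filter.1 hx
    obtain ⟨hyp, hyA⟩ := mem_filter.1 hy
    rcases le_total_of_isChain hchain (List.mem_toFinset.1 hxp) (List.mem_toFinset.1 hyp)
      with h | h
    · exact hA'.eq hxA hyA h
    · exact (hA'.eq hyA hxA h).symm
  · refine (card_eq_zero.2 (filter_eq_empty_iff.2 fun z hz hzA => hwin ?_)).le
    obtain ⟨⟨h₁, -⟩, -, h₂⟩ :=
      le_and_le_of_isChain hchain hhead he (List.mem_toFinset.1 hz)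
    have := mem_window.1 (hAw hzA)
    exact ⟨by simp only at h₁; omega, by omega⟩

theorem inS_fundWt_iff (ht : t ≤ n) :
    InS n (fundWt t) s ↔ ∃ A ∈ windowAntichains n t, s = (A : Set (ℕ × ℕ)).indicator 1 :=
  ⟨exists_mem_windowAntichains_of_inS ht, fun ⟨_, hA, hs⟩ =>
    hs ▸ inS_indicator_of_mem_windowAntichains ht hA⟩

end Characterization

lemma sum_range_ballot (N i : ℕ) :
    ∑ k ∈ range (i / 2 + 1), ballot (N + 1) ((i : ℤ) - 2 * k) = N.choose i := by
  have h := sum_range_sub' (fun k : ℕ => (chooseInt N ((i : ℤ) - 2 * k) : ℤ)) (i / 2 + 1)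
  simp only [Nat.cast_add, Nat.cast_one, Nat.cast_zero, mul_zero, sub_zero, chooseInt_natCast] at h
  rw [chooseInt_of_neg (by omega), Nat.cast_zero, sub_zero] at h
  rw [← h]
  refine sum_congr rfl fun k _ => ?_
  rw [ballot_succ]
  ring_nf

theorem ncard_setOf_inS_fundWt {n t : ℕ} (ht : t ≤ n) :
    ({s | InS n (fundWt t) s}.ncard : ℤ) = ballot (2 * n + 1) t := by
  have hset : {s | InS n (fundWt t) s} =
      (fun A : Finset (ℕ × ℕ) => (A : Set (ℕ × ℕ)).indicator 1) ''
        windowAntichains n t := by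
    ext s
    simp [inS_fundWt_iff ht, eq_comm]
  rw [hset, Set.ncard_image_of_injective _ fun A B h => coe_injective (Set.indicator_one_inj ℕ h),
    Set.ncard_coe_finset, card_windowAntichains, card_dominatingPairs (by omega)]
  congr 1
  omega

theorem stmt9_general (n i : ℕ) (hin : i ≤ n) :
    (∑ k ∈ Finset.range (i / 2 + 1),
      {s : ℕ × ℕ → ℕ | InS n (fundWt (i - 2 * k)) s}.ncard) = Nat.choose (2 * n) i := by
  have hterm : ∀ k ∈ range (i / 2 + 1), ({s | InS n (fundWt (i - 2 * k)) s}.ncard : ℤ) =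
      ballot (2 * n + 1) ((i : ℤ) - 2 * k) := fun k hk => by
    have := mem_range.1 hk
    rw [ncard_setOf_inS_fundWt (by omega), Nat.cast_sub (by omega)]
    push_cast
    rfl
  have h := sum_range_ballot (2 * n) i
  rw [← sum_congr rfl hterm] at h
  exact_mod_cast h

/-- `Σ_{k ≥ 0, i - 2k ≥ 0} #S(ω_{i-2k}) = C(2n, i)` (with `S(ω_0) = {0}`, which is
what `InS n (fundWt 0)` cuts out). -/
theorem stmt9 (n i : ℕ) (hn : 1 ≤ n) (hi : 1 ≤ i) (hin : i ≤ n) :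
    (∑ k ∈ Finset.range (i / 2 + 1),
      {s : ℕ × ℕ → ℕ | InS n (fundWt (i - 2 * k)) s}.ncard) = Nat.choose (2 * n) i :=
  stmt9_general n i hin

end SpPBW
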